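/- Let x ∈ ℓ¹ be such that (i) E(x) contains an interval of positive length, (ii) |x(n)| > ∑_{i>n}|x(i)| for infinitely many n, (iii) |x(n)| ≥ |x(n+1)| for almost all n. Then E(x) is neither a finite union of closed intervals nor homeomorphic to the Cantor set. -/

import Mathlib

open Set Filter Topology

/-- The achievement set (set of all subsums) of a series `∑ x n`. -/
noncomputable def achSet (x : ℕ → ℝ) : Set ℝ :=
  {a : ℝ | ∃ A : Set ℕ, HasSum (fun n : A => x n) a}

/-- The tail sum `∑_{i > n} |x i|`. -/
noncomputable def tailSum (x : ℕ → ℝ) (n : ℕ) : ℝ := ∑' i : ℕ, |x (n + 1 + i)|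

/-- `S` is a finite union of closed intervals. -/
def IsFinUnionClosedIntervals (S : Set ℝ) : Prop :=
  ∃ s : Finset (ℝ × ℝ), S = ⋃ p ∈ s, Set.Icc p.1 p.2

/-- `S` is homeomorphic to the Cantor set (the Cantor space `ℕ → Bool`). -/
def CantorLike (S : Set ℝ) : Prop := Nonempty (S ≃ₜ (ℕ → Bool))

/-!
Let `M = ∑ max (x n) 0`. The map `A ↦ A ∆ {n | 0 < x n}` turns subsums of `x` into subsums of
`|x|` and shows `E(x) = M - E(|x|)`, so it suffices to look at `E(|x|)` near its least point `0`.
Write `r_n = tailSum x n`. If `r_n < |x n|` and `|x n|` is minimal among the nonzero terms up to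
`n`, a subsum of `|x|` below `|x n|` only uses indices `> n`, so `(r_n, |x n|)` misses `E(|x|)`
while `r_n ∈ E(|x|)`. Such `n` give gaps and points of `E(|x|)` arbitrarily close to `0` from the
right, which is impossible for a finite union of closed intervals. Containing an interval, `E(x)`
is not totally disconnected.
-/

lemma eventually_mem_Icc_or_eventually_notMem (a p q : ℝ) :
    (∀ᶠ t in 𝓝[>] a, t ∈ Icc p q) ∨ ∀ᶠ t in 𝓝[>] a, t ∉ Icc p q := by
  rcases lt_or_ge a p with hap | hpa
  · right
    filter_upwards [nhdsWithin_le_nhds (Iio_mem_nhds hap)] with t ht hmem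
    exact (not_le.2 ht) hmem.1
  rcases lt_or_ge a q with haq | hqa
  · left
    filter_upwards [Ioo_mem_nhdsGT haq] with t ht using ⟨hpa.trans ht.1.le, ht.2.le⟩
  · right
    filter_upwards [self_mem_nhdsWithin] with t (ht : a < t) hmem
    exact (not_le.2 (hqa.trans_lt ht)) hmem.2

lemma IsFinUnionClosedIntervals.eventually_mem_or_eventually_notMem {S : Set ℝ}
    (hS : IsFinUnionClosedIntervals S) (a : ℝ) :
    (∀ᶠ t in 𝓝[>] a, t ∈ S) ∨ ∀ᶠ t in 𝓝[>] a, t ∉ S := by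
  classical
  obtain ⟨s, rfl⟩ := hS
  induction s using Finset.induction_on with
  | empty => simp
  | insert p s _ ih =>
    simp only [Finset.set_biUnion_insert, mem_union, not_or]
    rcases eventually_mem_Icc_or_eventually_notMem a p.1 p.2 with hp | hp
    · exact .inl (hp.mono fun t => Or.inl)
    rcases ih with hs | hs
    · exact .inl (hs.mono fun t => Or.inr)
    · exact .inr (hp.and hs)

lemma IsFinUnionClosedIntervals.preimage_const_sub {S : Set ℝ}
    (hS : IsFinUnionClosedIntervals S) (c : ℝ) :
    IsFinUnionClosedIntervals ((c - ·) ⁻¹' S) := by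
  classical
  obtain ⟨s, rfl⟩ := hS
  refine ⟨s.image fun p => (c - p.2, c - p.1), ?_⟩
  ext t
  simp only [mem_preimage, mem_iUnion, mem_Icc, Finset.mem_image, exists_prop]
  constructor
  · rintro ⟨p, hp, h1, h2⟩
    exact ⟨_, ⟨p, hp, rfl⟩, by linarith, by linarith⟩
  · rintro ⟨_, ⟨p, hp, rfl⟩, h1, h2⟩
    exact ⟨p, hp, by linarith, by linarith⟩

lemma not_cantorLike_of_Icc_subset {S : Set ℝ} {a b : ℝ} (hab : a < b) (hS : Icc a b ⊆ S) :
    ¬ CantorLike S := by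
  rintro ⟨e⟩
  have : TotallyDisconnectedSpace S := e.symm.totallyDisconnectedSpace
  exact hab.ne <| totallyDisconnectedSpace_subtype_iff.1 this (Icc a b) hS isPreconnected_Icc
    (left_mem_Icc.2 hab.le) (right_mem_Icc.2 hab.le)

section Subsums

variable {x : ℕ → ℝ}

lemma mem_achSet_iff {a : ℝ} : a ∈ achSet x ↔ ∃ A : Set ℕ, HasSum (A.indicator x) a :=
  exists_congr fun _ => hasSum_subtype_iff_indicator

lemma indicator_symmDiff_pos (x : ℕ → ℝ) (B : Set ℕ) :
    (symmDiff {n | 0 < x n} B).indicator x = fun n => max (x n) 0 - B.indicator (|x ·|) n := by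
  funext n
  rcases lt_or_ge 0 (x n) with h | h
  · by_cases hB : n ∈ B <;> simp [mem_symmDiff, h, h.le, hB, abs_of_pos]
  · by_cases hB : n ∈ B <;> simp [mem_symmDiff, h, h.not_gt, hB, abs_of_nonpos]

lemma indicator_symmDiff_pos_abs (x : ℕ → ℝ) (A : Set ℕ) :
    (symmDiff {n | 0 < x n} A).indicator (|x ·|) = fun n => max (x n) 0 - A.indicator x n := by
  funext n
  rcases lt_or_ge 0 (x n) with h | h
  · by_cases hA : n ∈ A <;> simp [mem_symmDiff, h, h.le, hA, abs_of_pos]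
  · by_cases hA : n ∈ A <;> simp [mem_symmDiff, h, h.not_gt, hA, abs_of_nonpos]

lemma summable_max_zero (hx : Summable fun n => |x n|) : Summable fun n => max (x n) 0 :=
  hx.of_nonneg_of_le (fun _ => le_max_right _ _) fun _ => max_le (le_abs_self _) (abs_nonneg _)

lemma mem_achSet_abs_iff (hx : Summable fun n => |x n|) (s : ℝ) :
    s ∈ achSet (|x ·|) ↔ (∑' n, max (x n) 0) - s ∈ achSet x := by
  have hM := (summable_max_zero hx).hasSum
  simp only [mem_achSet_iff]
  constructor
  · rintro ⟨B, hB⟩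
    exact ⟨symmDiff {n | 0 < x n} B, indicator_symmDiff_pos x B ▸ hM.sub hB⟩
  · rintro ⟨A, hA⟩
    refine ⟨symmDiff {n | 0 < x n} A, ?_⟩
    rw [indicator_symmDiff_pos_abs]
    simpa using hM.sub hA

lemma hasSum_indicator_Ioi_tailSum (hx : Summable fun n => |x n|) (n : ℕ) :
    HasSum ((Ioi n).indicator (|x ·|)) (tailSum x n) := by
  rw [← hasSum_nat_add_iff' (n + 1)]
  have hsum : Summable fun i => |x (n + 1 + i)| := by
    simpa only [add_comm] using (summable_nat_add_iff (n + 1)).2 hx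
  have hzero : ∑ i ∈ Finset.range (n + 1), (Ioi n).indicator (|x ·|) i = 0 :=
    Finset.sum_eq_zero fun i hi => indicator_of_notMem (by simpa [Nat.lt_succ_iff] using hi) _
  rw [hzero, sub_zero]
  have hshift : (fun i => (Ioi n).indicator (|x ·|) (i + (n + 1))) = fun i => |x (n + 1 + i)| := by
    funext i
    rw [indicator_of_mem (by simp; omega), add_comm]
  exact hshift ▸ hsum.hasSum

lemma abs_le_tailSum (hx : Summable fun n => |x n|) {n m : ℕ} (hnm : n < m) :
    |x m| ≤ tailSum x n := by
  simpa [indicator_of_mem (show m ∈ Ioi n from hnm)] using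
    le_hasSum (hasSum_indicator_Ioi_tailSum hx n) m fun j _ => indicator_nonneg (by simp) j

lemma tailSum_pos (hx : Summable fun n => |x n|)
    (hbig : ∀ N : ℕ, ∃ n ≥ N, tailSum x n < |x n|) (n : ℕ) : 0 < tailSum x n := by
  obtain ⟨m, hm, hlt⟩ := hbig (n + 1)
  have : 0 ≤ tailSum x m := tsum_nonneg fun _ => abs_nonneg _
  exact this.trans_lt (hlt.trans_le (abs_le_tailSum hx hm))

lemma le_tailSum_of_mem_achSet_abs (hx : Summable fun n => |x n|) {n : ℕ}
    (hmin : ∀ i ≤ n, x i ≠ 0 → |x n| ≤ |x i|) {t : ℝ} (ht : t ∈ achSet (|x ·|))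
    (hlt : t < |x n|) : t ≤ tailSum x n := by
  obtain ⟨B, hB⟩ := mem_achSet_iff.1 ht
  have hnonneg : ∀ C : Set ℕ, 0 ≤ C.indicator (|x ·|) := fun _ =>
    indicator_nonneg fun _ _ => abs_nonneg _
  refine hasSum_le (fun i => ?_) hB (hasSum_indicator_Ioi_tailSum hx n)
  by_cases hiB : i ∈ B
  · rcases lt_or_ge n i with hni | hin
    · rw [indicator_of_mem hiB, indicator_of_mem (show i ∈ Ioi n from hni)]
    · have hxi : x i = 0 := by
        by_contra hne
        have : |x i| ≤ t := by
          simpa [indicator_of_mem hiB] using le_hasSum hB i fun j _ => hnonneg B j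
        linarith [hmin i hin hne]
      simpa [indicator_of_mem hiB, hxi] using hnonneg _ i
  · rw [indicator_of_notMem hiB]
    exact hnonneg _ i

lemma eventually_abs_le_abs_of_ne_zero (hx0 : Tendsto (|x ·|) atTop (𝓝 0))
    (hmono : ∀ᶠ n in atTop, |x (n + 1)| ≤ |x n|) :
    ∀ᶠ n in atTop, ∀ i ≤ n, x i ≠ 0 → |x n| ≤ |x i| := by
  obtain ⟨N, hN⟩ := eventually_atTop.1 hmono
  have hanti : AntitoneOn (|x ·|) {n | N ≤ n} := antitoneOn_nat_Ici_of_succ_le hN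
  have hhead : ∀ᶠ n in atTop, ∀ i ∈ Finset.range N, x i ≠ 0 → |x n| ≤ |x i| := by
    rw [eventually_all_finset]
    intro i _
    by_cases hi : x i = 0
    · exact .of_forall fun _ h => absurd hi h
    · filter_upwards [hx0.eventually (ge_mem_nhds (abs_pos.2 hi))] with n hn _ using hn
  filter_upwards [hhead, eventually_ge_atTop N] with n hhead hNn i hin hi
  rcases lt_or_ge i N with hiN | hNi
  · exact hhead i (Finset.mem_range.2 hiN) hi
  · exact hanti hNi hNn hin

lemma exists_tailSum_lt_abs_lt (hx : Summable fun n => |x n|)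
    (hbig : ∀ N : ℕ, ∃ n ≥ N, tailSum x n < |x n|)
    (hmono : ∀ᶠ n in atTop, |x (n + 1)| ≤ |x n|) {δ : ℝ} (hδ : 0 < δ) :
    ∃ n, tailSum x n < |x n| ∧ |x n| < δ ∧ ∀ i ≤ n, x i ≠ 0 → |x n| ≤ |x i| := by
  have hx0 := hx.tendsto_atTop_zero
  exact ((frequently_atTop.2 hbig).and_eventually
    ((hx0.eventually (gt_mem_nhds hδ)).and (eventually_abs_le_abs_of_ne_zero hx0 hmono))).exists

lemma not_isFinUnionClosedIntervals_achSet_abs (hx : Summable fun n => |x n|)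
    (hbig : ∀ N : ℕ, ∃ n ≥ N, tailSum x n < |x n|)
    (hmono : ∀ᶠ n in atTop, |x (n + 1)| ≤ |x n|) :
    ¬ IsFinUnionClosedIntervals (achSet (|x ·|)) := by
  intro hS
  rcases hS.eventually_mem_or_eventually_notMem 0 with hin | hout
  · obtain ⟨δ, hδ, hsub⟩ := (nhdsGT_basis 0).eventually_iff.1 hin
    obtain ⟨n, hgap, hsmall, hmin⟩ := exists_tailSum_lt_abs_lt hx hbig hmono hδ
    have hpos := tailSum_pos hx hbig n
    have hmid : (tailSum x n + |x n|) / 2 ∈ achSet (|x ·|) := hsub ⟨by linarith, by linarith⟩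
    linarith [le_tailSum_of_mem_achSet_abs hx hmin hmid (by linarith)]
  · obtain ⟨δ, hδ, hsub⟩ := (nhdsGT_basis 0).eventually_iff.1 hout
    obtain ⟨n, hgap, hsmall, -⟩ := exists_tailSum_lt_abs_lt hx hbig hmono hδ
    exact hsub ⟨tailSum_pos hx hbig n, by linarith⟩
      (mem_achSet_iff.2 ⟨_, hasSum_indicator_Ioi_tailSum hx n⟩)

end Subsums

theorem achSet_cantorval (x : ℕ → ℝ) (hx : Summable fun n => |x n|)
    (hint : ∃ a b : ℝ, a < b ∧ Set.Icc a b ⊆ achSet x)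
    (hbig : ∀ N : ℕ, ∃ n ≥ N, tailSum x n < |x n|)
    (hmono : ∀ᶠ n in atTop, |x (n + 1)| ≤ |x n|) :
    ¬ IsFinUnionClosedIntervals (achSet x) ∧ ¬ CantorLike (achSet x) := by
  refine ⟨fun hS => not_isFinUnionClosedIntervals_achSet_abs hx hbig hmono ?_, ?_⟩
  · convert hS.preimage_const_sub (∑' n, max (x n) 0)
    ext s
    exact mem_achSet_abs_iff hx s
  · obtain ⟨a, b, hab, hsub⟩ := hint
    exact not_cantorLike_of_Icc_subset hab hsub
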